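/- Let H ∈ (0,1). Then F_H is integrable on (0,∞) and ∫₀^∞ F_H(v) dv ≤ 2/H + 2(3 − H)/((1 − H)(2 − H)). -/

import Mathlib

open Real MeasureTheory

/-- `F_H(v) = 2 cosh(Hv) - |2 sinh(v/2)|^{2H}`. -/
noncomputable def Ffun (H v : ℝ) : ℝ :=
  2 * Real.cosh (H * v) - |2 * Real.sinh (v / 2)| ^ (2 * H)

/-!
For `v > 0` we have `2 sinh (v/2) = e^{v/2} (1 - e^{-v})`, hence
`F_H(v) = e^{-Hv} + e^{Hv} (1 - (1 - e^{-v})^{2H})`. The second term lies between `0` and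
`2 e^{-(1-H)v}` by the Bernoulli-type bound `(1 - x)^a ≥ 1 - 2x` for `a ≤ 2`, so `F_H` is
dominated by `e^{-Hv} + 2 e^{-(1-H)v}`, whose integral over `(0, ∞)` is `1/H + 2/(1-H)`.
-/

lemma integral_exp_neg_mul_Ioi_zero {b : ℝ} (hb : 0 < b) :
    ∫ x in Set.Ioi (0:ℝ), exp (-b * x) = 1 / b := by
  rw [integral_exp_mul_Ioi (neg_lt_zero.mpr hb)]
  simp [neg_div]

lemma one_sub_two_mul_le_one_sub_rpow {a x : ℝ} (ha : a ≤ 2) (hx₀ : 0 ≤ x) (hx₁ : x < 1) :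
    1 - 2 * x ≤ (1 - x) ^ a := by
  rcases le_or_gt a 1 with ha₁ | ha₁
  · have h := rpow_le_rpow_of_exponent_ge (by linarith : (0:ℝ) < 1 - x) (by linarith) ha₁
    rw [rpow_one] at h
    linarith
  · have h := one_add_mul_self_le_rpow_one_add (s := -x) (by linarith) ha₁.le
    rw [← sub_eq_add_neg] at h
    nlinarith

lemma Ffun_eq_of_pos (H : ℝ) {v : ℝ} (hv : 0 < v) :
    Ffun H v = exp (-(H * v)) + exp (H * v) * (1 - (1 - exp (-v)) ^ (2 * H)) := by
  have hsinh : 2 * sinh (v / 2) = exp (v / 2) * (1 - exp (-v)) := by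
    rw [sinh_eq, show -(v / 2) = v / 2 + -v by ring, exp_add]
    ring
  have hpos : 0 < 1 - exp (-v) := by linarith [exp_lt_one_iff.mpr (neg_lt_zero.mpr hv)]
  rw [Ffun, hsinh, abs_of_pos (by positivity), mul_rpow (exp_pos _).le hpos.le, ← exp_mul,
    show v / 2 * (2 * H) = H * v by ring, cosh_eq]
  ring

lemma Ffun_nonneg {H v : ℝ} (hH : 0 ≤ H) (hv : 0 < v) : 0 ≤ Ffun H v := by
  have hexp := exp_lt_one_iff.mpr (neg_lt_zero.mpr hv)
  have hle : (1 - exp (-v)) ^ (2 * H) ≤ 1 :=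
    rpow_le_one (by linarith) (by linarith [exp_pos (-v)]) (by linarith)
  rw [Ffun_eq_of_pos H hv]
  have := exp_pos (-(H * v))
  have := exp_pos (H * v)
  nlinarith

lemma Ffun_le {H v : ℝ} (hH : H ≤ 1) (hv : 0 < v) :
    Ffun H v ≤ exp (-H * v) + 2 * exp (-(1 - H) * v) := by
  have hbern := one_sub_two_mul_le_one_sub_rpow (a := 2 * H) (by linarith) (exp_pos (-v)).le
    (exp_lt_one_iff.mpr (neg_lt_zero.mpr hv))
  calc Ffun H v = exp (-(H * v)) + exp (H * v) * (1 - (1 - exp (-v)) ^ (2 * H)) :=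
        Ffun_eq_of_pos H hv
    _ ≤ exp (-(H * v)) + exp (H * v) * (2 * exp (-v)) := by gcongr; linarith
    _ = exp (-H * v) + 2 * exp (-(1 - H) * v) := by
        rw [neg_mul, mul_left_comm, ← exp_add]
        ring_nf

lemma continuous_Ffun {H : ℝ} (hH : 0 ≤ H) : Continuous (Ffun H) := by
  unfold Ffun
  fun_prop (disch := positivity)

/-- For `H ∈ (0,1)`, `F_H` is integrable on `(0,∞)` and its integral is
bounded by `2/H + 2(3 − H)/((1 − H)(2 − H))`. -/
theorem Ffun_integrableOn_and_integral_le (H : ℝ) (hH : H ∈ Set.Ioo (0:ℝ) 1) :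
    IntegrableOn (fun v => Ffun H v) (Set.Ioi (0:ℝ))
    ∧ ∫ v in Set.Ioi (0:ℝ), Ffun H v
        ≤ 2 / H + 2 * (3 - H) / ((1 - H) * (2 - H)) := by
  obtain ⟨hH₀, hH₁⟩ := hH
  have h1H : 0 < 1 - H := by linarith
  have hmajorant : IntegrableOn (fun v => exp (-H * v) + 2 * exp (-(1 - H) * v)) (Set.Ioi 0) :=
    (exp_neg_integrableOn_Ioi 0 hH₀).add ((exp_neg_integrableOn_Ioi 0 h1H).const_mul 2)
  have hint : IntegrableOn (fun v => Ffun H v) (Set.Ioi 0) := by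
    refine hmajorant.mono' (continuous_Ffun hH₀.le).aestronglyMeasurable ?_
    filter_upwards [self_mem_ae_restrict measurableSet_Ioi] with v hv
    rw [norm_of_nonneg (Ffun_nonneg hH₀.le hv)]
    exact Ffun_le hH₁.le hv
  refine ⟨hint, ?_⟩
  calc ∫ v in Set.Ioi 0, Ffun H v
      ≤ ∫ v in Set.Ioi 0, (exp (-H * v) + 2 * exp (-(1 - H) * v)) :=
        setIntegral_mono_on hint hmajorant measurableSet_Ioi fun v hv => Ffun_le hH₁.le hv
    _ = 1 / H + 2 * (1 / (1 - H)) := by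
        rw [integral_add (exp_neg_integrableOn_Ioi 0 hH₀)
            ((exp_neg_integrableOn_Ioi 0 h1H).const_mul 2), integral_const_mul,
          integral_exp_neg_mul_Ioi_zero hH₀, integral_exp_neg_mul_Ioi_zero h1H]
    _ ≤ 2 / H + 2 * (3 - H) / ((1 - H) * (2 - H)) := by
        have h2H : 0 < 2 - H := by linarith
        have hfirst : 1 / H ≤ 2 / H := by gcongr; norm_num
        have hsecond : 2 * (1 / (1 - H)) ≤ 2 * (3 - H) / ((1 - H) * (2 - H)) := by
          rw [mul_one_div, div_le_div_iff₀ h1H (by positivity)]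
          nlinarith
        linarith
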